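/- arXiv:1208.5785 — 5 statements merged into one kernel-verified Lean document; each statement's English description precedes it below -/
import Mathlib

section
/- A Z-graded ring A has non-degenerate products in degree n if and only if A admits a non-degenerate associative graded bilinear form to an abelian group concentrated in degree n. -/
/-!
For the forward direction take `X = A` and `⟨a, b⟩ = (a b)ₙ`, the degree-`n` component of the
product: on homogeneous elements of complementary degrees it is the product itself, and it is
associative because multiplication is. Conversely, associativity against `1 ∈ A⁰` gives
`⟨a, b⟩ = ⟨a b, 1⟩`, so `a b = 0` forces `⟨a, b⟩ = 0`.
-/

/-- `A` has non-degenerate products in degree `n`: for every `i` and every nonzero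
homogeneous `a ∈ 𝒜 i` there are `b, c ∈ 𝒜 (n - i)` with `a * b ≠ 0` and `c * a ≠ 0`. -/
def NondegProducts {A : Type} [Ring A] (𝒜 : ℤ → AddSubgroup A) (n : ℤ) : Prop :=
  ∀ i : ℤ, ∀ a ∈ 𝒜 i, a ≠ 0 →
    (∃ b ∈ 𝒜 (n - i), a * b ≠ 0) ∧ ∃ c ∈ 𝒜 (n - i), c * a ≠ 0

namespace GradedRing

variable {ι A σ : Type*} [DecidableEq ι] [AddMonoid ι] [Semiring A] [SetLike σ A]
  [AddSubmonoidClass σ A] (𝒜 : ι → σ) [GradedRing 𝒜] (n : ι)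

def projMulForm : A →+ A →+ A :=
  AddMonoidHom.mul.compr₂ (proj 𝒜 n)

@[simp]
theorem projMulForm_apply (a b : A) : projMulForm 𝒜 n a b = proj 𝒜 n (a * b) :=
  rfl

variable {𝒜 n}

theorem projMulForm_of_add_ne {i j : ι} (hij : i + j ≠ n) {a b : A} (ha : a ∈ 𝒜 i)
    (hb : b ∈ 𝒜 j) : projMulForm 𝒜 n a b = 0 := by
  rw [projMulForm_apply, proj_apply,
    DirectSum.decompose_of_mem_ne 𝒜 (SetLike.mul_mem_graded ha hb) hij]

theorem projMulForm_of_add_eq {i j : ι} (hij : i + j = n) {a b : A} (ha : a ∈ 𝒜 i)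
    (hb : b ∈ 𝒜 j) : projMulForm 𝒜 n a b = a * b := by
  rw [projMulForm_apply, proj_apply,
    DirectSum.decompose_of_mem_same 𝒜 (hij ▸ SetLike.mul_mem_graded ha hb)]

theorem projMulForm_mul_left (a b c : A) :
    projMulForm 𝒜 n (a * b) c = projMulForm 𝒜 n a (b * c) := by
  rw [projMulForm_apply, projMulForm_apply, mul_assoc]

end GradedRing

theorem mul_ne_zero_of_form_ne_zero {A σ X : Type*} [NonAssocSemiring A] [SetLike σ A]
    [AddCommMonoid X] {𝒜 : ℤ → σ} [SetLike.GradedOne 𝒜] {n : ℤ} {B : A →+ A →+ X}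
    (hassoc : ∀ i j : ℤ, ∀ a ∈ 𝒜 i, ∀ b ∈ 𝒜 j, ∀ c ∈ 𝒜 (n - i - j),
      B (a * b) c = B a (b * c))
    {i : ℤ} {a b : A} (ha : a ∈ 𝒜 i) (hb : b ∈ 𝒜 (n - i)) (hB : B a b ≠ 0) : a * b ≠ 0 := by
  have hone : (1 : A) ∈ 𝒜 (n - i - (n - i)) :=
    (sub_self (n - i)).symm ▸ SetLike.one_mem_graded 𝒜
  intro hab
  apply hB
  rw [← mul_one b, ← hassoc i (n - i) a ha b hb 1 hone, hab, map_zero,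
    AddMonoidHom.zero_apply]

/-- A `ℤ`-graded ring `A` has non-degenerate products in degree `n` if and
only if `A` admits a non-degenerate associative graded bilinear form with values in an
abelian group concentrated in degree `n`. -/
theorem nondegProducts_iff_exists_form {A : Type} [Ring A]
    (𝒜 : ℤ → AddSubgroup A) [GradedRing 𝒜] (n : ℤ) :
    NondegProducts 𝒜 n ↔
      ∃ (X : AddCommGrpCat.{0}) (B : A →+ A →+ X),
        -- the form is graded (concentrated in degree `n`)
        (∀ i j : ℤ, i + j ≠ n → ∀ a ∈ 𝒜 i, ∀ b ∈ 𝒜 j, B a b = 0) ∧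
        -- non-degenerate
        (∀ i : ℤ, ∀ a ∈ 𝒜 i, a ≠ 0 →
          (∃ b ∈ 𝒜 (n - i), B a b ≠ 0) ∧ ∃ c ∈ 𝒜 (n - i), B c a ≠ 0) ∧
        -- associative
        (∀ i j : ℤ, ∀ a ∈ 𝒜 i, ∀ b ∈ 𝒜 j, ∀ c ∈ 𝒜 (n - i - j),
          B (a * b) c = B a (b * c)) := by
  constructor
  · intro hprod
    refine ⟨AddCommGrpCat.of A, GradedRing.projMulForm 𝒜 n,
      fun i j hij a ha b hb => GradedRing.projMulForm_of_add_ne hij ha hb, fun i a ha ha0 => ?_,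
      fun i j a _ b _ c _ => GradedRing.projMulForm_mul_left a b c⟩
    obtain ⟨⟨b, hb, hab⟩, c, hc, hca⟩ := hprod i a ha ha0
    exact ⟨⟨b, hb, by rwa [GradedRing.projMulForm_of_add_eq (add_sub_cancel i n) ha hb]⟩,
      c, hc, by rwa [GradedRing.projMulForm_of_add_eq (sub_add_cancel n i) hc ha]⟩
  · rintro ⟨X, B, -, hform, hassoc⟩ i a ha ha0
    obtain ⟨⟨b, hb, hab⟩, c, hc, hca⟩ := hform i a ha ha0
    have ha' : a ∈ 𝒜 (n - (n - i)) := (sub_sub_cancel n i).symm ▸ ha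
    exact ⟨⟨b, hb, mul_ne_zero_of_form_ne_zero hassoc ha hb hab⟩,
      c, hc, mul_ne_zero_of_form_ne_zero hassoc hc ha' hca⟩
end

section
/- Let A be a Z-graded ring with non-degenerate products in degree n, and let r be a homogeneous central element of A of positive degree which acts regularly on the non-negative part A^{≥0}. Then the ideal I generated by A^{≤n} and the r-torsion part Tor_r A annihilate each other: I · Tor_r A = 0 = Tor_r A · I. -/
/-- The subgroup of `A` of elements supported in degrees belonging to `S`. -/
def gradedPart {A : Type} [Ring A] (𝒜 : ℤ → AddSubgroup A) (S : Set ℤ) : AddSubgroup A :=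
  ⨆ i ∈ S, 𝒜 i

/-!
Let `z` be homogeneous of degree `i ≤ n` and `t` homogeneous of degree `j` with `r ^ m * t = 0`.
If `z * t ≠ 0`, non-degeneracy gives `b` of degree `n - i - j` with `z * t * b ≠ 0`; but `t * b`
has degree `n - i ≥ 0` and is killed by `r ^ m`, which acts regularly in non-negative degrees
since `r` does and has positive degree, so `t * b = 0`. Symmetrically `t * z = 0`, using that
`r` is central. The components of an `r`-torsion element are again `r`-torsion because `r` is
homogeneous, and the two-sided annihilator of the torsion ideal is a two-sided ideal, so it
contains the ideal generated by `A^{≤ n}`.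
-/

open DirectSum

namespace TwoSidedIdeal

variable {R : Type*} [Ring R]

def annihilator (I : TwoSidedIdeal R) : TwoSidedIdeal R :=
  mk' {x | ∀ a ∈ I, x * a = 0 ∧ a * x = 0}
    (fun a _ => ⟨zero_mul a, mul_zero a⟩)
    (fun hx hy a ha => by
      simp only [add_mul, mul_add, (hx a ha).1, (hx a ha).2, (hy a ha).1, (hy a ha).2,
        add_zero, and_self])
    (fun hx a ha => by simp only [neg_mul, mul_neg, (hx a ha).1, (hx a ha).2, neg_zero, and_self])
    (fun {u x} hx a ha => by
      rw [mul_assoc, (hx a ha).1, ← mul_assoc, (hx _ (I.mul_mem_right a u ha)).2, mul_zero]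
      exact ⟨rfl, rfl⟩)
    (fun {x u} hx a ha => by
      rw [mul_assoc, (hx _ (I.mul_mem_left u a ha)).1, ← mul_assoc, (hx a ha).2, zero_mul]
      exact ⟨rfl, rfl⟩)

lemma mem_annihilator {I : TwoSidedIdeal R} {x : R} :
    x ∈ I.annihilator ↔ ∀ a ∈ I, x * a = 0 ∧ a * x = 0 :=
  mem_mk' ..

def torsion (r : R) (hr : ∀ x, r * x = x * r) : TwoSidedIdeal R :=
  mk' {a | ∃ m : ℕ, r ^ m * a = 0}
    ⟨0, mul_zero _⟩
    (fun ⟨m, hm⟩ ⟨k, hk⟩ => ⟨m + k, by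
      have e : r ^ (m + k) = r ^ k * r ^ m := by rw [pow_add, (Commute.pow_pow_self r m k).eq]
      rw [mul_add, e, mul_assoc, hm, mul_zero, zero_add, ← e, pow_add, mul_assoc, hk, mul_zero]⟩)
    (fun ⟨m, hm⟩ => ⟨m, by rw [mul_neg, hm, neg_zero]⟩)
    (fun {u _} ⟨m, hm⟩ => ⟨m, by
      rw [← mul_assoc, ((show Commute r u from hr u).pow_left m).eq, mul_assoc, hm, mul_zero]⟩)
    (fun ⟨m, hm⟩ => ⟨m, by rw [← mul_assoc, hm, zero_mul]⟩)

lemma mem_torsion {r : R} {hr : ∀ x, r * x = x * r} {a : R} :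
    a ∈ torsion r hr ↔ ∃ m : ℕ, r ^ m * a = 0 :=
  mem_mk' ..

end TwoSidedIdeal

lemma DirectSum.mul_coe_decompose_eq_zero {ι A σ : Type*} [DecidableEq ι] [AddGroup ι]
    [Semiring A] [SetLike σ A] [AddSubmonoidClass σ A] (𝒜 : ι → σ) [GradedRing 𝒜]
    {s t : A} {e : ι} (hs : s ∈ 𝒜 e) (hst : s * t = 0) (j : ι) :
    s * (decompose 𝒜 t j : A) = 0 := by
  rw [← coe_decompose_mul_add_of_left_mem 𝒜 hs, hst, decompose_zero]
  rfl

section Graded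

variable {A : Type} [Ring A] (𝒜 : ℤ → AddSubgroup A)

lemma le_gradedPart {S : Set ℤ} {i : ℤ} (hi : i ∈ S) : 𝒜 i ≤ gradedPart 𝒜 S :=
  le_iSup₂ (f := fun i (_ : i ∈ S) => 𝒜 i) i hi

def IsRegularOnNonneg (s : A) : Prop :=
  ∀ k : ℤ, 0 ≤ k → ∀ w ∈ 𝒜 k, s * w = 0 → w = 0

variable {𝒜}

lemma isRegularOnNonneg_of_gradedPart {s : A}
    (hs : ∀ a ∈ gradedPart 𝒜 {i | 0 ≤ i}, s * a = 0 → a = 0) : IsRegularOnNonneg 𝒜 s :=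
  fun _ hk w hw => hs w (le_gradedPart 𝒜 (S := {i | 0 ≤ i}) hk hw)

variable {n : ℤ} {s z t : A} {i j : ℤ}

section GradedMonoid

variable [SetLike.GradedMonoid 𝒜]

lemma IsRegularOnNonneg.pow {r : A} {d : ℤ} (hd : 0 ≤ d)
    (hr : r ∈ 𝒜 d) (hreg : IsRegularOnNonneg 𝒜 r) (m : ℕ) : IsRegularOnNonneg 𝒜 (r ^ m) := by
  induction m with
  | zero => intro _ _ w _ h; simpa using h
  | succ m ih =>
    intro k hk w hw h
    have hrw : r * w = 0 :=
      ih (d + k) (by omega) _ (SetLike.mul_mem_graded hr hw) (by rwa [← mul_assoc, ← pow_succ])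
    exact hreg k hk w hw hrw

lemma NondegProducts.mul_annihilated_eq_zero (hnd : NondegProducts 𝒜 n)
    (hs : IsRegularOnNonneg 𝒜 s) (hz : z ∈ 𝒜 i) (hi : i ≤ n) (ht : t ∈ 𝒜 j) (hst : s * t = 0) :
    z * t = 0 := by
  by_contra hzt
  obtain ⟨⟨b, hb, hztb⟩, -⟩ := hnd (i + j) (z * t) (SetLike.mul_mem_graded hz ht) hzt
  have htb : t * b ∈ 𝒜 (n - i) := by
    convert SetLike.mul_mem_graded ht hb using 2
    ring
  have htb0 : t * b = 0 := hs (n - i) (by omega) _ htb (by rw [← mul_assoc, hst, zero_mul])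
  exact hztb (by rw [mul_assoc, htb0, mul_zero])

lemma NondegProducts.annihilated_mul_eq_zero (hnd : NondegProducts 𝒜 n)
    (hs : IsRegularOnNonneg 𝒜 s) (hsc : ∀ x, s * x = x * s) (hz : z ∈ 𝒜 i) (hi : i ≤ n)
    (ht : t ∈ 𝒜 j) (hst : s * t = 0) : t * z = 0 := by
  by_contra htz
  obtain ⟨-, c, hc, hctz⟩ := hnd (j + i) (t * z) (SetLike.mul_mem_graded ht hz) htz
  have hct : c * t ∈ 𝒜 (n - i) := by
    convert SetLike.mul_mem_graded hc ht using 2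
    ring
  have hct0 : c * t = 0 :=
    hs (n - i) (by omega) _ hct (by rw [← mul_assoc, hsc, mul_assoc, hst, mul_zero])
  exact hctz (by rw [← mul_assoc, hct0, zero_mul])

end GradedMonoid

variable [GradedRing 𝒜] {e : ℤ}

lemma NondegProducts.mul_eq_zero_and_mul_eq_zero (hnd : NondegProducts 𝒜 n)
    (hse : s ∈ 𝒜 e) (hs : IsRegularOnNonneg 𝒜 s) (hsc : ∀ x, s * x = x * s)
    (hz : z ∈ 𝒜 i) (hi : i ≤ n) (hst : s * t = 0) : z * t = 0 ∧ t * z = 0 := by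
  classical
  have hcomp (j : ℤ) : s * (decompose 𝒜 t j : A) = 0 := mul_coe_decompose_eq_zero 𝒜 hse hst j
  rw [← sum_support_decompose 𝒜 t, Finset.mul_sum, Finset.sum_mul]
  exact ⟨Finset.sum_eq_zero fun j _ =>
      hnd.mul_annihilated_eq_zero hs hz hi (SetLike.coe_mem _) (hcomp j),
    Finset.sum_eq_zero fun j _ =>
      hnd.annihilated_mul_eq_zero hs hsc hz hi (SetLike.coe_mem _) (hcomp j)⟩

end Graded

/-- If `A` is a `ℤ`-graded ring with non-degenerate products in degree `n`
and `r` is a homogeneous central element of positive degree acting regularly on `A^{≥0}`,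
then the two-sided ideal `I` generated by `A^{≤ n}` and the `r`-torsion part `Tor_r A`
annihilate each other. -/
theorem ideal_mul_torsion_eq_zero {A : Type} [Ring A]
    (𝒜 : ℤ → AddSubgroup A) [GradedRing 𝒜] (n : ℤ)
    (hnd : NondegProducts 𝒜 n)
    (r : A) (d : ℤ) (hd : 0 < d) (hr : r ∈ 𝒜 d)
    (hcentral : ∀ x : A, r * x = x * r)
    (hreg : ∀ a ∈ gradedPart 𝒜 {i | 0 ≤ i}, r * a = 0 → a = 0) :
    ∀ x ∈ TwoSidedIdeal.span {y : A | ∃ i ≤ n, y ∈ 𝒜 i},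
      ∀ a : A, (∃ m : ℕ, r ^ m * a = 0) → x * a = 0 ∧ a * x = 0 := by
  have hregPow : ∀ m : ℕ, IsRegularOnNonneg 𝒜 (r ^ m) :=
    (isRegularOnNonneg_of_gradedPart hreg).pow hd.le hr
  have hspan : TwoSidedIdeal.span {y : A | ∃ i ≤ n, y ∈ 𝒜 i} ≤
      (TwoSidedIdeal.torsion r hcentral).annihilator := by
    rw [TwoSidedIdeal.span_le]
    rintro z ⟨i, hi, hz⟩
    rw [SetLike.mem_coe, TwoSidedIdeal.mem_annihilator]
    intro a ha
    obtain ⟨m, hm⟩ := TwoSidedIdeal.mem_torsion.1 ha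
    exact hnd.mul_eq_zero_and_mul_eq_zero (SetLike.pow_mem_graded m hr) (hregPow m)
      (fun x => ((show Commute r x from hcentral x).pow_left m).eq) hz hi hm
  intro x hx a ha
  exact TwoSidedIdeal.mem_annihilator.1 (hspan hx) a (TwoSidedIdeal.mem_torsion.2 ha)
end

section
/- Let A be a Z-graded ring with non-degenerate products in degree n, and let r be a homogeneous central element of positive degree acting regularly on A^{≥0}. If n ≥ 0, then r acts regularly on all of A. -/
/-!
The argument only looks at homogeneous components. Since `r` is homogeneous, `r a = 0` forces
`r aᵢ = 0` for every component `aᵢ` of `a`. For homogeneous `x ≠ 0` of degree `i`, pick `c` of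
degree `n - i` with `c x ≠ 0`; then `c x` lies in degree `n ≥ 0`, and centrality gives
`r (c x) = c (r x) = 0`, contradicting regularity of `r` on `A^{≥0}`.
-/

open DirectSum

theorem mem_gradedPart_of_mem {A : Type} [Ring A] {𝒜 : ℤ → AddSubgroup A} {S : Set ℤ} {i : ℤ}
    (hi : i ∈ S) {a : A} (ha : a ∈ 𝒜 i) : a ∈ gradedPart 𝒜 S :=
  le_iSup₂ (f := fun j (_ : j ∈ S) => 𝒜 j) i hi ha

theorem NondegProducts.eq_zero_of_central_mul_eq_zero {A : Type} [Ring A]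
    {𝒜 : ℤ → AddSubgroup A} [SetLike.GradedMul 𝒜] {n : ℤ} (hnd : NondegProducts 𝒜 n) {r : A}
    (hcentral : ∀ x : A, r * x = x * r) (hreg : ∀ y ∈ 𝒜 n, r * y = 0 → y = 0)
    {i : ℤ} {x : A} (hx : x ∈ 𝒜 i) (hrx : r * x = 0) : x = 0 := by
  by_contra hx0
  obtain ⟨-, c, hc, hcx⟩ := hnd i x hx hx0
  have hcx_mem : c * x ∈ 𝒜 n := by
    simpa only [sub_add_cancel] using SetLike.mul_mem_graded hc hx
  refine hcx (hreg _ hcx_mem ?_)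
  rw [← mul_assoc, hcentral c, mul_assoc, hrx, mul_zero]

theorem mul_decompose_eq_zero_of_mul_eq_zero {A : Type} [Ring A] {𝒜 : ℤ → AddSubgroup A}
    [GradedRing 𝒜] {r : A} {d : ℤ} (hr : r ∈ 𝒜 d) {a : A} (ha : r * a = 0) (i : ℤ) :
    r * (decompose 𝒜 a i : A) = 0 := by
  rw [← coe_decompose_mul_add_of_left_mem 𝒜 hr, ha, decompose_zero, DirectSum.zero_apply,
    ZeroMemClass.coe_zero]

theorem eq_zero_of_mul_eq_zero_of_forall_homogeneous {A : Type} [Ring A]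
    {𝒜 : ℤ → AddSubgroup A} [GradedRing 𝒜] {r : A} {d : ℤ} (hr : r ∈ 𝒜 d)
    (hhom : ∀ i, ∀ x ∈ 𝒜 i, r * x = 0 → x = 0) {a : A} (ha : r * a = 0) : a = 0 := by
  have hcomp : decompose 𝒜 a = 0 := by
    ext i
    exact hhom i _ (SetLike.coe_mem _) (mul_decompose_eq_zero_of_mul_eq_zero hr ha i)
  rwa [← decompose_zero 𝒜, (decompose 𝒜).injective.eq_iff] at hcomp

theorem regular_of_nonneg_degree_general {A : Type} [Ring A]
    (𝒜 : ℤ → AddSubgroup A) [GradedRing 𝒜] (n : ℤ) (hn : 0 ≤ n)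
    (hnd : NondegProducts 𝒜 n)
    (r : A) (d : ℤ) (hr : r ∈ 𝒜 d)
    (hcentral : ∀ x : A, r * x = x * r)
    (hreg : ∀ a ∈ gradedPart 𝒜 {i | 0 ≤ i}, r * a = 0 → a = 0) :
    ∀ a : A, r * a = 0 → a = 0 := by
  intro a ha
  have hreg_n : ∀ y ∈ 𝒜 n, r * y = 0 → y = 0 := fun y hy =>
    hreg y (mem_gradedPart_of_mem (show n ∈ {i : ℤ | 0 ≤ i} from hn) hy)
  exact eq_zero_of_mul_eq_zero_of_forall_homogeneous hr
    (fun _ _ hx => hnd.eq_zero_of_central_mul_eq_zero hcentral hreg_n hx) ha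

/-- If `A` is a `ℤ`-graded ring with non-degenerate products in degree
`n ≥ 0` and `r` is a homogeneous central element of positive degree acting regularly on
`A^{≥0}`, then `r` acts regularly on all of `A`. -/
theorem regular_of_nonneg_degree {A : Type} [Ring A]
    (𝒜 : ℤ → AddSubgroup A) [GradedRing 𝒜] (n : ℤ) (hn : 0 ≤ n)
    (hnd : NondegProducts 𝒜 n)
    (r : A) (d : ℤ) (hd : 0 < d) (hr : r ∈ 𝒜 d)
    (hcentral : ∀ x : A, r * x = x * r)
    (hreg : ∀ a ∈ gradedPart 𝒜 {i | 0 ≤ i}, r * a = 0 → a = 0) :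
    ∀ a : A, r * a = 0 → a = 0 :=
  regular_of_nonneg_degree_general 𝒜 n hn hnd r d hr hcentral hreg
end

section
/- Let A be a Z-graded k-algebra over a field which is n-shifted selfdual, and let r be a central homogeneous element of positive degree acting regularly on all of A. Then A is periodic: multiplication by r gives isomorphisms A^i → A^{i+|r|} for all i ∈ Z. -/
/-! Under the duality `Φ`, left multiplication by `r` from `A^{n+i}` to `A^{n+i+d}` is the
transpose of right multiplication by `r` from `A^{-i-d}` to `A^{-i}`. The latter is injective since
`r` is regular and central, so its transpose is surjective; injectivity of left multiplication
by `r` is regularity itself. -/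

variable {k A : Type} [Field k] [Ring A] [Algebra k A]

/-- `A` is `n`-shifted selfdual. -/
def IsShiftedSelfdual (𝒜 : ℤ → Submodule k A) (n : ℤ) : Prop :=
  ∃ Φ : ∀ i : ℤ, (𝒜 (n + i)) ≃ₗ[k] Module.Dual k (𝒜 (-i)),
    ∀ (i j : ℤ) (a x y : A), a ∈ 𝒜 j → ∀ (hx : x ∈ 𝒜 (n + i))
      (hy : y ∈ 𝒜 (-(i + j))) (hax : a * x ∈ 𝒜 (n + (i + j))) (hya : y * a ∈ 𝒜 (-i)),
      Φ (i + j) ⟨a * x, hax⟩ ⟨y, hy⟩ = Φ i ⟨x, hx⟩ ⟨y * a, hya⟩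

namespace IsShiftedSelfdual

variable {𝒜 : ℤ → Submodule k A} [SetLike.GradedMonoid 𝒜] {n d : ℤ} {r : A}

theorem exists_mul_left_eq (hsd : IsShiftedSelfdual 𝒜 n) (hr : r ∈ 𝒜 d)
    (hright : IsRightRegular r) (i : ℤ) : ∀ y ∈ 𝒜 (i + d), ∃ x ∈ 𝒜 i, r * x = y := by
  obtain ⟨Φ, hΦ⟩ := hsd
  obtain ⟨i, rfl⟩ : ∃ i₀, i = n + i₀ := ⟨i - n, by ring⟩
  let mulLeft : 𝒜 (n + i) →ₗ[k] 𝒜 (n + (i + d)) :=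
    (LinearMap.mulLeft k r).restrict fun x hx ↦ by
      simpa [add_comm, add_left_comm] using SetLike.mul_mem_graded hr hx
  let mulRight : 𝒜 (-(i + d)) →ₗ[k] 𝒜 (-i) :=
    (LinearMap.mulRight k r).restrict fun z hz ↦ by
      simpa using SetLike.mul_mem_graded hz hr
  have hmulRight : Function.Injective mulRight := fun z w h ↦
    Subtype.ext (hright (congrArg Subtype.val h))
  have htranspose : (Φ (i + d)).toLinearMap ∘ₗ mulLeft =
      mulRight.dualMap ∘ₗ (Φ i).toLinearMap := by
    ext x z
    exact hΦ i d r x z hr x.2 z.2 _ _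
  have hmulLeft : Function.Surjective mulLeft := by
    have : mulLeft = (Φ (i + d)).symm.toLinearMap ∘ₗ mulRight.dualMap ∘ₗ (Φ i).toLinearMap := by
      rw [← htranspose, ← LinearMap.comp_assoc, LinearEquiv.symm_comp, LinearMap.id_comp]
    rw [this]
    exact (Φ (i + d)).symm.surjective.comp
      ((LinearMap.dualMap_surjective_of_injective hmulRight).comp (Φ i).surjective)
  intro y hy
  obtain ⟨x, hx⟩ := hmulLeft ⟨y, by rwa [← add_assoc]⟩
  exact ⟨x, x.2, congrArg Subtype.val hx⟩

end IsShiftedSelfdual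

theorem periodic_of_regular_general
    (𝒜 : ℤ → Submodule k A) [GradedRing 𝒜] (n : ℤ)
    (hsd : IsShiftedSelfdual 𝒜 n)
    (r : A) (d : ℤ) (hr : r ∈ 𝒜 d)
    (hcentral : ∀ x : A, r * x = x * r)
    (hreg : ∀ a : A, r * a = 0 → a = 0) :
    ∀ i : ℤ, ∀ y ∈ 𝒜 (i + d), ∃! x : A, x ∈ 𝒜 i ∧ r * x = y := by
  have hleft : IsLeftRegular r := isLeftRegular_of_non_zero_divisor r hreg
  intro i y hy
  obtain ⟨x, hx, rfl⟩ := hsd.exists_mul_left_eq hr (hleft.right_of_commute hcentral) i y hy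
  exact ⟨x, ⟨hx, rfl⟩, fun w hw ↦ hleft hw.2⟩

/-- If `A` is an `n`-shifted selfdual `ℤ`-graded algebra over a field and
`r` is a central homogeneous element of degree `d > 0` acting regularly on all of `A`, then
`A` is periodic: multiplication by `r` gives bijections `A^i → A^{i + d}` for all `i`. -/
theorem periodic_of_regular
    (𝒜 : ℤ → Submodule k A) [GradedRing 𝒜] (n : ℤ)
    (hsd : IsShiftedSelfdual 𝒜 n)
    (r : A) (d : ℤ) (hd : 0 < d) (hr : r ∈ 𝒜 d)
    (hcentral : ∀ x : A, r * x = x * r)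
    (hreg : ∀ a : A, r * a = 0 → a = 0) :
    ∀ i : ℤ, ∀ y ∈ 𝒜 (i + d), ∃! x : A, x ∈ 𝒜 i ∧ r * x = y :=
  periodic_of_regular_general 𝒜 n hsd r d hr hcentral hreg
end

section
/- Let A be a Z-graded ring having non-degenerate products in degree -1, such that A^{≥0} admits a regular sequence (r, r̃) of central homogeneous elements of positive degree. Then (A^{<0})^2 = 0 and A is isomorphic to the trivial extension A^{≥0} ⋉ A^{<0}. -/
open DirectSum

section GradedPart

variable {A : Type} [Ring A] {𝒜 : ℤ → AddSubgroup A}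

theorem mem_gradedPart {i : ℤ} {a : A} (ha : a ∈ 𝒜 i) {S : Set ℤ} (hi : i ∈ S) :
    a ∈ gradedPart 𝒜 S :=
  le_iSup₂ (f := fun i (_ : i ∈ S) => 𝒜 i) i hi ha

@[elab_as_elim]
theorem gradedPart_induction {S : Set ℤ} {motive : A → Prop} {x : A} (hx : x ∈ gradedPart 𝒜 S)
    (mem : ∀ i ∈ S, ∀ a ∈ 𝒜 i, motive a) (zero : motive 0)
    (add : ∀ a b, motive a → motive b → motive (a + b)) : motive x := by
  refine AddSubgroup.iSup_induction (C := motive) (fun i => ⨆ _ : i ∈ S, 𝒜 i) hx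
    (fun i a ha => ?_) zero add
  by_cases hi : i ∈ S
  · rw [iSup_pos hi] at ha
    exact mem i hi a ha
  · rw [iSup_neg hi, AddSubgroup.mem_bot] at ha
    exact ha ▸ zero

theorem mul_mem_of_forall_homogeneous {S T : Set ℤ} {P : AddSubgroup A}
    (h : ∀ i ∈ S, ∀ j ∈ T, ∀ a ∈ 𝒜 i, ∀ b ∈ 𝒜 j, a * b ∈ P) {a b : A}
    (ha : a ∈ gradedPart 𝒜 S) (hb : b ∈ gradedPart 𝒜 T) : a * b ∈ P := by
  refine gradedPart_induction ha (fun i hi a ha => ?_) (by simp) fun a a' ha ha' => ?_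
  · refine gradedPart_induction hb (fun j hj b hb => h i hi j hj a ha b hb) (by simp)
      fun b b' hb hb' => ?_
    simpa only [mul_add] using P.add_mem hb hb'
  · simpa only [add_mul] using P.add_mem ha ha'

theorem mul_mem_gradedPart_of_homogeneous [SetLike.GradedMul 𝒜] {d : ℤ} {r a : A}
    (hr : r ∈ 𝒜 d) {S T : Set ℤ} (h : ∀ j ∈ S, d + j ∈ T) (ha : a ∈ gradedPart 𝒜 S) :
    r * a ∈ gradedPart 𝒜 T :=
  mul_mem_of_forall_homogeneous (S := {d})
    (fun _ hi j hj _ hr _ ha => mem_gradedPart (SetLike.mul_mem_graded hr ha) (hi ▸ h j hj))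
    (mem_gradedPart hr rfl) ha

theorem gradedPart_union (S T : Set ℤ) :
    gradedPart 𝒜 (S ∪ T) = gradedPart 𝒜 S ⊔ gradedPart 𝒜 T :=
  iSup_union

variable [Decomposition 𝒜]

theorem gradedPart_univ : gradedPart 𝒜 Set.univ = ⊤ := by
  classical
  refine (AddSubgroup.eq_top_iff' _).2 fun x => ?_
  induction x using Decomposition.inductionOn 𝒜 with
  | zero => exact zero_mem _
  | homogeneous m => exact mem_gradedPart m.2 (Set.mem_univ _)
  | add x y hx hy => exact add_mem hx hy

theorem decompose_eq_zero_of_mem_gradedPart {S : Set ℤ} {x : A}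
    (hx : x ∈ gradedPart 𝒜 S) {n : ℤ} (hn : n ∉ S) : (decompose 𝒜 x n : A) = 0 := by
  refine gradedPart_induction hx (fun i hi a ha => ?_) (by simp) fun a b ha hb => ?_
  · exact decompose_of_mem_ne 𝒜 ha fun h => hn (h ▸ hi)
  · simp [ha, hb]

theorem disjoint_gradedPart {S T : Set ℤ} (h : Disjoint S T) :
    Disjoint (gradedPart 𝒜 S) (gradedPart 𝒜 T) := by
  classical
  refine AddSubgroup.disjoint_def.2 fun {x} hS hT => (decompose 𝒜).injective ?_
  ext n
  by_cases hn : n ∈ S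
  · simpa using decompose_eq_zero_of_mem_gradedPart hT (h.notMem_of_mem_left hn)
  · simpa using decompose_eq_zero_of_mem_gradedPart hS hn

theorem eq_zero_of_mem_gradedPart {S : Set ℤ} {n : ℤ} (hn : n ∉ S) {a : A} (ha : a ∈ 𝒜 n)
    (hS : a ∈ gradedPart 𝒜 S) : a = 0 :=
  AddSubgroup.disjoint_def.1 (disjoint_gradedPart (Set.disjoint_singleton_left.2 hn))
    (mem_gradedPart ha (Set.mem_singleton n)) hS

end GradedPart

section RegularSequence

variable {A : Type} [Ring A] {𝒜 : ℤ → AddSubgroup A} [GradedRing 𝒜] {r rt : A} {d dt : ℤ}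

theorem eq_zero_of_pow_mul_eq_zero (hr : r ∈ 𝒜 d) (hd : 0 ≤ d)
    (hreg : ∀ a ∈ gradedPart 𝒜 {i | 0 ≤ i}, r * a = 0 → a = 0) (n : ℕ) {a : A}
    (ha : a ∈ gradedPart 𝒜 {i | 0 ≤ i}) (h : r ^ n * a = 0) : a = 0 := by
  induction n generalizing a with
  | zero => simpa using h
  | succ n ih =>
    have hra : r * a ∈ gradedPart 𝒜 {i | 0 ≤ i} :=
      mul_mem_gradedPart_of_homogeneous hr (fun j (hj : 0 ≤ j) => show 0 ≤ d + j by omega) ha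
    exact hreg a ha (ih hra (by rwa [pow_succ, mul_assoc] at h))

theorem exists_eq_mul_of_pow_mul_eq_mul (hrt : rt ∈ 𝒜 dt) (hdt : 0 ≤ dt)
    (hreg : ∀ a ∈ gradedPart 𝒜 {i | 0 ≤ i},
      (∃ b ∈ gradedPart 𝒜 {i | 0 ≤ i}, rt * a = r * b) →
      ∃ c ∈ gradedPart 𝒜 {i | 0 ≤ i}, a = r * c) (k : ℕ) {a : A}
    (ha : a ∈ gradedPart 𝒜 {i | 0 ≤ i}) (h : ∃ b ∈ gradedPart 𝒜 {i | 0 ≤ i}, rt ^ k * a = r * b) :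
    ∃ c ∈ gradedPart 𝒜 {i | 0 ≤ i}, a = r * c := by
  induction k generalizing a with
  | zero => simpa using h
  | succ k ih =>
    have hrta : rt * a ∈ gradedPart 𝒜 {i | 0 ≤ i} :=
      mul_mem_gradedPart_of_homogeneous hrt (fun j (hj : 0 ≤ j) => show 0 ≤ dt + j by omega) ha
    exact hreg a ha (ih hrta (by simpa only [pow_succ, mul_assoc] using h))

theorem mul_eq_zero_of_neg_of_nonneg_add (hr : r ∈ 𝒜 d) (hrt : rt ∈ 𝒜 dt) (hdt : 0 < dt)
    (hcomm : Commute rt r)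
    (hreg : ∀ a ∈ gradedPart 𝒜 {i | 0 ≤ i},
      (∃ b ∈ gradedPart 𝒜 {i | 0 ≤ i}, rt * a = r * b) →
      ∃ c ∈ gradedPart 𝒜 {i | 0 ≤ i}, a = r * c)
    {j : ℤ} {v : A} (hv : v ∈ 𝒜 j) (hj : j < 0) (hjd : 0 ≤ d + j) : r * v = 0 := by
  obtain ⟨k, hk⟩ := Int.eq_ofNat_of_zero_le (neg_nonneg.2 hj.le)
  have hrv : r * v ∈ 𝒜 (d + j) := SetLike.mul_mem_graded hr hv
  have hrtv : rt ^ k * v ∈ gradedPart 𝒜 {i | 0 ≤ i} := by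
    refine mem_gradedPart (SetLike.mul_mem_graded (SetLike.pow_mem_graded k hrt) hv) ?_
    show 0 ≤ k • dt + j
    rw [nsmul_eq_mul]
    nlinarith
  obtain ⟨c, hc, hrvc⟩ := exists_eq_mul_of_pow_mul_eq_mul hrt hdt.le hreg k
    (mem_gradedPart hrv hjd) ⟨_, hrtv, by rw [← mul_assoc, (hcomm.pow_left k).eq, mul_assoc]⟩
  have hrv_ge : r * v ∈ gradedPart 𝒜 {i | d ≤ i} := by
    rw [hrvc]
    exact mul_mem_gradedPart_of_homogeneous hr (fun j (hj : 0 ≤ j) => show d ≤ d + j by omega) hc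
  exact eq_zero_of_mem_gradedPart (show d + j ∉ {i | d ≤ i} by simpa using hj) hrv hrv_ge

theorem pow_mul_eq_zero_of_neg (hr : r ∈ 𝒜 d) (hrt : rt ∈ 𝒜 dt) (hdt : 0 < dt)
    (hcomm : Commute rt r)
    (hreg : ∀ a ∈ gradedPart 𝒜 {i | 0 ≤ i},
      (∃ b ∈ gradedPart 𝒜 {i | 0 ≤ i}, rt * a = r * b) →
      ∃ c ∈ gradedPart 𝒜 {i | 0 ≤ i}, a = r * c)
    (n : ℕ) {j : ℤ} {v : A} (hv : v ∈ 𝒜 j) (hj : j < 0) (hjn : 0 ≤ n * d + j) :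
    r ^ n * v = 0 := by
  induction n generalizing j v with
  | zero => omega
  | succ n ih =>
    rw [pow_succ, mul_assoc]
    by_cases hjd : 0 ≤ d + j
    · rw [mul_eq_zero_of_neg_of_nonneg_add hr hrt hdt hcomm hreg hv hj hjd, mul_zero]
    · exact ih (SetLike.mul_mem_graded hr hv) (by omega) (by push_cast at hjn; linarith)

theorem mul_eq_zero_of_neg_factor_of_nonneg_degree (hr : r ∈ 𝒜 d) (hd : 0 < d) (hrt : rt ∈ 𝒜 dt)
    (hdt : 0 < dt) (hcr : ∀ x, Commute r x)
    (hreg1 : ∀ a ∈ gradedPart 𝒜 {i | 0 ≤ i}, r * a = 0 → a = 0)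
    (hreg2 : ∀ a ∈ gradedPart 𝒜 {i | 0 ≤ i},
      (∃ b ∈ gradedPart 𝒜 {i | 0 ≤ i}, rt * a = r * b) →
      ∃ c ∈ gradedPart 𝒜 {i | 0 ≤ i}, a = r * c)
    {i j : ℤ} {u v : A} (hu : u ∈ 𝒜 i) (hv : v ∈ 𝒜 j) (hj : j < 0) (hij : 0 ≤ i + j) :
    u * v = 0 ∧ v * u = 0 := by
  obtain ⟨n, hn⟩ := Int.eq_ofNat_of_zero_le (neg_nonneg.2 hj.le)
  have hrv : r ^ n * v = 0 :=
    pow_mul_eq_zero_of_neg hr hrt hdt (hcr rt).symm hreg2 n hv hj (by nlinarith)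
  constructor
  · refine eq_zero_of_pow_mul_eq_zero hr hd.le hreg1 n
      (mem_gradedPart (SetLike.mul_mem_graded hu hv) hij) ?_
    rw [← mul_assoc, ((hcr u).pow_left n).eq, mul_assoc, hrv, mul_zero]
  · refine eq_zero_of_pow_mul_eq_zero hr hd.le hreg1 n
      (mem_gradedPart (SetLike.mul_mem_graded hv hu) (by rwa [add_comm])) ?_
    rw [← mul_assoc, hrv, zero_mul]

end RegularSequence

section NegativePart

variable {A : Type} [Ring A] {𝒜 : ℤ → AddSubgroup A} [GradedRing 𝒜]

theorem mul_eq_zero_of_neg_of_neg (hnd : NondegProducts 𝒜 (-1))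
    (hvan : ∀ i j : ℤ, ∀ u ∈ 𝒜 i, ∀ v ∈ 𝒜 j, j < 0 → 0 ≤ i + j → u * v = 0)
    {i j : ℤ} {u v : A} (hu : u ∈ 𝒜 i) (hv : v ∈ 𝒜 j) (hi : i < 0) (hj : j < 0) :
    u * v = 0 := by
  by_contra huv
  obtain ⟨-, c, hc, hcuv⟩ := hnd (i + j) (u * v) (SetLike.mul_mem_graded hu hv) huv
  have hcu : c * u = 0 := hvan _ i c hc u hu hi (by omega)
  exact hcuv (by rw [← mul_assoc, hcu, zero_mul])

theorem gradedPart_neg_mul_eq_zero (hnd : NondegProducts 𝒜 (-1))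
    (hvan : ∀ i j : ℤ, ∀ u ∈ 𝒜 i, ∀ v ∈ 𝒜 j, j < 0 → 0 ≤ i + j → u * v = 0)
    {a b : A} (ha : a ∈ gradedPart 𝒜 {i | i < 0}) (hb : b ∈ gradedPart 𝒜 {i | i < 0}) :
    a * b = 0 :=
  AddSubgroup.mem_bot.1 <| mul_mem_of_forall_homogeneous (P := ⊥)
    (fun _ hi _ hj _ hu _ hv => mul_eq_zero_of_neg_of_neg hnd hvan hu hv hi hj) ha hb

theorem mul_mem_gradedPart_neg
    (hvan : ∀ i j : ℤ, ∀ u ∈ 𝒜 i, ∀ v ∈ 𝒜 j, j < 0 → 0 ≤ i + j → u * v = 0 ∧ v * u = 0)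
    (x : A) {b : A} (hb : b ∈ gradedPart 𝒜 {i | i < 0}) :
    x * b ∈ gradedPart 𝒜 {i | i < 0} ∧ b * x ∈ gradedPart 𝒜 {i | i < 0} := by
  have hx : x ∈ gradedPart 𝒜 Set.univ := by
    rw [gradedPart_univ]
    exact AddSubgroup.mem_top x
  refine ⟨mul_mem_of_forall_homogeneous (fun i _ j hj u hu v hv => ?_) hx hb,
    mul_mem_of_forall_homogeneous (fun j hj i _ v hv u hu => ?_) hb hx⟩
  · rcases lt_or_ge (i + j) 0 with hij | hij
    · exact mem_gradedPart (SetLike.mul_mem_graded hu hv) hij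
    · simpa only [(hvan i j u hu v hv hj hij).1] using zero_mem _
  · rcases lt_or_ge (j + i) 0 with hij | hij
    · exact mem_gradedPart (SetLike.mul_mem_graded hv hu) hij
    · simpa only [(hvan i j u hu v hv hj (by omega)).2] using zero_mem _

theorem exists_add_gradedPart_nonneg_gradedPart_neg (x : A) :
    ∃ y ∈ gradedPart 𝒜 {i | 0 ≤ i}, ∃ z ∈ gradedPart 𝒜 {i | i < 0}, x = y + z := by
  have hunion : {i : ℤ | 0 ≤ i} ∪ {i | i < 0} = Set.univ := by
    ext i; simpa using le_or_gt 0 i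
  have hx : x ∈ gradedPart 𝒜 {i | 0 ≤ i} ⊔ gradedPart 𝒜 {i | i < 0} := by
    rw [← gradedPart_union, hunion, gradedPart_univ]
    exact AddSubgroup.mem_top x
  obtain ⟨y, hy, z, hz, rfl⟩ := AddSubgroup.mem_sup.1 hx
  exact ⟨y, hy, z, hz, rfl⟩

theorem eq_zero_of_add_eq_zero_gradedPart_nonneg_gradedPart_neg {y z : A}
    (hy : y ∈ gradedPart 𝒜 {i | 0 ≤ i}) (hz : z ∈ gradedPart 𝒜 {i | i < 0}) (h : y + z = 0) :
    y = 0 ∧ z = 0 := by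
  have hyz : y = -z := eq_neg_of_add_eq_zero_left h
  have hy0 : y = 0 := AddSubgroup.disjoint_def.1
    (disjoint_gradedPart (𝒜 := 𝒜) (S := {i | 0 ≤ i}) (T := {i | i < 0})
      (Set.disjoint_left.2 fun i (hi : 0 ≤ i) (hi' : i < 0) => hi'.not_ge hi)) hy (hyz ▸ neg_mem hz)
  exact ⟨hy0, by simpa [hy0] using h⟩

end NegativePart

theorem trivial_extension_of_depth_two_general {A : Type} [Ring A]
    (𝒜 : ℤ → AddSubgroup A) [GradedRing 𝒜]
    (hnd : NondegProducts 𝒜 (-1))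
    (r rt : A) (d dt : ℤ) (hd : 0 < d) (hdt : 0 < dt)
    (hr : r ∈ 𝒜 d) (hrt : rt ∈ 𝒜 dt)
    (hcr : ∀ x : A, r * x = x * r)
    (hreg1 : ∀ a ∈ gradedPart 𝒜 {i | 0 ≤ i}, r * a = 0 → a = 0)
    (hreg2 : ∀ a ∈ gradedPart 𝒜 {i | 0 ≤ i},
      (∃ b ∈ gradedPart 𝒜 {i | 0 ≤ i}, rt * a = r * b) →
      ∃ c ∈ gradedPart 𝒜 {i | 0 ≤ i}, a = r * c) :
    -- `(A^{<0})² = 0`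
    (∀ a ∈ gradedPart 𝒜 {i | i < 0}, ∀ b ∈ gradedPart 𝒜 {i | i < 0}, a * b = 0) ∧
    -- `A^{<0}` is a two-sided ideal
    (∀ x : A, ∀ b ∈ gradedPart 𝒜 {i | i < 0},
      x * b ∈ gradedPart 𝒜 {i | i < 0} ∧ b * x ∈ gradedPart 𝒜 {i | i < 0}) ∧
    -- `A = A^{≥0} ⊕ A^{<0}` additively
    (∀ x : A, ∃ y ∈ gradedPart 𝒜 {i | 0 ≤ i}, ∃ z ∈ gradedPart 𝒜 {i | i < 0},
      x = y + z) ∧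
    (∀ y ∈ gradedPart 𝒜 {i | 0 ≤ i}, ∀ z ∈ gradedPart 𝒜 {i | i < 0},
      y + z = 0 → y = 0 ∧ z = 0) := by
  have hvan : ∀ i j : ℤ, ∀ u ∈ 𝒜 i, ∀ v ∈ 𝒜 j, j < 0 → 0 ≤ i + j → u * v = 0 ∧ v * u = 0 :=
    fun _ _ _ hu _ hv hj hij =>
      mul_eq_zero_of_neg_factor_of_nonneg_degree hr hd hrt hdt hcr hreg1 hreg2 hu hv hj hij
  exact ⟨fun _ ha _ hb =>
      gradedPart_neg_mul_eq_zero hnd (fun _ _ _ hu _ hv hj hij => (hvan _ _ _ hu _ hv hj hij).1)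
        ha hb,
    fun x _ hb => mul_mem_gradedPart_neg hvan x hb,
    exists_add_gradedPart_nonneg_gradedPart_neg,
    fun _ hy _ hz h => eq_zero_of_add_eq_zero_gradedPart_nonneg_gradedPart_neg hy hz h⟩

/-- If `A` is a `ℤ`-graded ring with non-degenerate products in degree
`-1` and `A^{≥0}` admits a regular sequence `(r, r̃)` of central homogeneous elements of
positive degree, then `(A^{<0})² = 0` and `A` is the trivial extension `A^{≥0} ⋉ A^{<0}`:
`A^{<0}` is a square-zero two-sided ideal, `A^{≥0}` is a subring, and
`A = A^{≥0} ⊕ A^{<0}` additively, with multiplication determined accordingly. -/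
theorem trivial_extension_of_depth_two {A : Type} [Ring A]
    (𝒜 : ℤ → AddSubgroup A) [GradedRing 𝒜]
    (hnd : NondegProducts 𝒜 (-1))
    (r rt : A) (d dt : ℤ) (hd : 0 < d) (hdt : 0 < dt)
    (hr : r ∈ 𝒜 d) (hrt : rt ∈ 𝒜 dt)
    (hcr : ∀ x : A, r * x = x * r) (hcrt : ∀ x : A, rt * x = x * rt)
    (hreg1 : ∀ a ∈ gradedPart 𝒜 {i | 0 ≤ i}, r * a = 0 → a = 0)
    (hreg2 : ∀ a ∈ gradedPart 𝒜 {i | 0 ≤ i},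
      (∃ b ∈ gradedPart 𝒜 {i | 0 ≤ i}, rt * a = r * b) →
      ∃ c ∈ gradedPart 𝒜 {i | 0 ≤ i}, a = r * c) :
    -- `(A^{<0})² = 0`
    (∀ a ∈ gradedPart 𝒜 {i | i < 0}, ∀ b ∈ gradedPart 𝒜 {i | i < 0}, a * b = 0) ∧
    -- `A^{<0}` is a two-sided ideal
    (∀ x : A, ∀ b ∈ gradedPart 𝒜 {i | i < 0},
      x * b ∈ gradedPart 𝒜 {i | i < 0} ∧ b * x ∈ gradedPart 𝒜 {i | i < 0}) ∧
    -- `A = A^{≥0} ⊕ A^{<0}` additively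
    (∀ x : A, ∃ y ∈ gradedPart 𝒜 {i | 0 ≤ i}, ∃ z ∈ gradedPart 𝒜 {i | i < 0},
      x = y + z) ∧
    (∀ y ∈ gradedPart 𝒜 {i | 0 ≤ i}, ∀ z ∈ gradedPart 𝒜 {i | i < 0},
      y + z = 0 → y = 0 ∧ z = 0) :=
  trivial_extension_of_depth_two_general 𝒜 hnd r rt d dt hd hdt hr hrt hcr hreg1 hreg2
end
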